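/- Let K be a field and m, n natural numbers. Then: (i) for every m×n matrix A over K, the rank of the block matrix fromBlocks 0 A Aᵀ 0 is at most 2 · min(m,n), so its corank (m+n) − rank is at least |m − n|; and (ii) there exists an m×n matrix A over K for which the rank of fromBlocks 0 A Aᵀ 0 equals exactly 2 · min(m,n). -/
import Mathlib


open Matrix

/-- The submodule product is linearly equivalent to the product of submodules. -/
def subProdEquiv {K V W : Type*} [Field K] [AddCommGroup V] [Module K V]
    [AddCommGroup W] [Module K W] (p : Submodule K V) (q : Submodule K W) :
    ↥(p.prod q) ≃ₗ[K] p × q where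
  toFun x := (⟨x.1.1, x.2.1⟩, ⟨x.1.2, x.2.2⟩)
  invFun x := ⟨(x.1.1, x.2.1), ⟨x.1.2, x.2.2⟩⟩
  left_inv _ := rfl
  right_inv _ := rfl
  map_add' _ _ := rfl
  map_smul' _ _ := rfl

lemma rank_fromBlocks_key {K : Type*} [Field K] {m n : ℕ}
    (A : Matrix (Fin m) (Fin n) K) :
    (Matrix.fromBlocks (0 : Matrix (Fin m) (Fin m) K) A Aᵀ
      (0 : Matrix (Fin n) (Fin n) K)).rank = 2 * A.rank := by
  classical
  set M := Matrix.fromBlocks (0 : Matrix (Fin m) (Fin m) K) A Aᵀ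
      (0 : Matrix (Fin n) (Fin n) K) with hM
  have hMv : ∀ w : (Fin m ⊕ Fin n) → K,
      M *ᵥ w = Sum.elim (A *ᵥ (w ∘ Sum.inr)) (Aᵀ *ᵥ (w ∘ Sum.inl)) := by
    intro w
    conv_lhs => rw [← Sum.elim_comp_inl_inr w]
    rw [hM, Matrix.fromBlocks_mulVec]
    simp
  let e := LinearEquiv.sumArrowLequivProdArrow (Fin m) (Fin n) K K
  have hmap : (LinearMap.range M.mulVecLin).map (e : ((Fin m ⊕ Fin n) → K) →ₗ[K] _) =
      (LinearMap.range A.mulVecLin).prod (LinearMap.range Aᵀ.mulVecLin) := by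
    ext uv
    constructor
    · rintro ⟨f, ⟨w, rfl⟩, rfl⟩
      refine ⟨⟨w ∘ Sum.inr, ?_⟩, ⟨w ∘ Sum.inl, ?_⟩⟩ <;>
        simp [e, Matrix.mulVecLin_apply, hMv w, LinearEquiv.sumArrowLequivProdArrow,
          Equiv.sumArrowEquivProdArrow, Matrix.mulVec_transpose]
    · rintro ⟨⟨x, hx⟩, ⟨y, hy⟩⟩
      refine ⟨Sum.elim (A *ᵥ x) (Aᵀ *ᵥ y), ⟨Sum.elim y x, ?_⟩, ?_⟩
      · rw [Matrix.mulVecLin_apply, hMv]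
        simp
      · simp only [e, LinearEquiv.sumArrowLequivProdArrow]
        ext <;> simp [Equiv.sumArrowEquivProdArrow]
        · exact congrFun hx _
        · exact congrFun hy _
  have h1 : M.rank = Module.finrank K
      ((LinearMap.range A.mulVecLin).prod (LinearMap.range Aᵀ.mulVecLin)) := by
    rw [Matrix.rank, ← hmap]
    exact (LinearEquiv.finrank_map_eq e _).symm
  rw [h1, (subProdEquiv _ _).finrank_eq, Module.finrank_prod]
  rw [← Matrix.rank, ← Matrix.rank, Matrix.rank_transpose]
  ring

theorem rank_fromBlocks_zero_A_At_zero_le_and_exists_eq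
    (K : Type*) [Field K] (m n : ℕ) :
    (∀ A : Matrix (Fin m) (Fin n) K,
        (Matrix.fromBlocks 0 A Aᵀ 0).rank ≤ 2 * min m n ∧
        max m n - min m n ≤ (m + n) - (Matrix.fromBlocks 0 A Aᵀ 0).rank) ∧
    (∃ A : Matrix (Fin m) (Fin n) K,
        (Matrix.fromBlocks 0 A Aᵀ 0).rank = 2 * min m n) := by
  classical
  constructor
  · intro A
    have hkey := rank_fromBlocks_key A
    have hA : A.rank ≤ min m n :=
      le_min (A.rank_le_height) (A.rank_le_width)
    have hle : (Matrix.fromBlocks 0 A Aᵀ 0).rank ≤ 2 * min m n := by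
      rw [hkey]; omega
    exact ⟨hle, by omega⟩
  · -- the "identity-like" matrix
    set A : Matrix (Fin m) (Fin n) K :=
      Matrix.of fun i j => if (i : ℕ) = (j : ℕ) then 1 else 0 with hA
    refine ⟨A, ?_⟩
    rw [rank_fromBlocks_key A]
    have hrank : A.rank = min m n := by
      rcases le_total m n with h | h
      · -- A * Aᵀ = 1, so rank A ≥ m
        have hmul : A * Aᵀ = (1 : Matrix (Fin m) (Fin m) K) := by
          ext i i'
          simp only [Matrix.mul_apply, Matrix.transpose_apply, hA, Matrix.of_apply,
            Matrix.one_apply]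
          rw [Finset.sum_eq_single (Fin.castLE h i)]
          · simp [Fin.ext_iff, eq_comm]
          · intro b _ hb
            have : (i : ℕ) ≠ (b : ℕ) := by
              intro hc
              exact hb (by simp [Fin.ext_iff, ← hc])
            simp [this]
          · simp
        have h1 : m ≤ A.rank := by
          have := Matrix.rank_mul_le_left A Aᵀ
          rw [hmul, Matrix.rank_one] at this
          simpa using this
        have h2 : A.rank ≤ m := A.rank_le_height
        rw [min_eq_left h]
        omega
      · -- Aᵀ * A = 1, so rank A ≥ n
        have hmul : Aᵀ * A = (1 : Matrix (Fin n) (Fin n) K) := by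
          ext j j'
          simp only [Matrix.mul_apply, Matrix.transpose_apply, hA, Matrix.of_apply,
            Matrix.one_apply]
          rw [Finset.sum_eq_single (Fin.castLE h j)]
          · simp [Fin.ext_iff, eq_comm]
          · intro b _ hb
            have : (b : ℕ) ≠ (j : ℕ) := by
              intro hc
              exact hb (by simp [Fin.ext_iff, hc])
            simp [this]
          · simp
        have h1 : n ≤ A.rank := by
          have := Matrix.rank_mul_le_right Aᵀ A
          rw [hmul, Matrix.rank_one] at this
          simpa using this
        have h2 : A.rank ≤ n := A.rank_le_width
        rw [min_eq_right h]
        omega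
    rw [hrank]
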